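/- arXiv:math/0609122 — 4 statements merged into one kernel-verified Lean document; each statement's English description precedes it below -/
import Mathlib

section
/- For every finite nonempty set S of negative integers, there exists a connected signed bipartite graph whose signed degree set equals S. -/
/-- A signed bipartite graph `G(U,V)`: a simple bipartite graph with nonempty
finite parts `U` and `V` in which each edge is labeled positive or negative. -/
structure SignedBipartiteGraph where
  U : Type
  V : Type
  [fU : Fintype U]
  [fV : Fintype V]
  [dU : DecidableEq U]
  [dV : DecidableEq V]
  nU : Nonempty U
  nV : Nonempty V
  /-- `pos u v = true` iff there is a positive edge `uv`. -/
  pos : U → V → Bool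
  /-- `neg u v = true` iff there is a negative edge `uv`. -/
  neg : U → V → Bool
  /-- An edge cannot be both positive and negative (simple graph). -/
  disj : ∀ u v, ¬(pos u v = true ∧ neg u v = true)

namespace SignedBipartiteGraph

attribute [instance] fU fV dU dV

variable (G : SignedBipartiteGraph)

/-- Adjacency of the underlying bipartite graph on `U ⊕ V`. -/
def adjFun : (G.U ⊕ G.V) → (G.U ⊕ G.V) → Prop
  | Sum.inl u, Sum.inr v => G.pos u v = true ∨ G.neg u v = true
  | Sum.inr v, Sum.inl u => G.pos u v = true ∨ G.neg u v = true
  | _, _ => False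

/-- The underlying simple graph on `U ⊕ V`. -/
def graph : SimpleGraph (G.U ⊕ G.V) where
  Adj := G.adjFun
  symm := ⟨by intro a b h; cases a <;> cases b <;> simp_all [adjFun]⟩
  loopless := ⟨by intro a h; cases a <;> simp_all [adjFun]⟩

/-- The signed bipartite graph is connected if its underlying graph is. -/
def Connected : Prop := G.graph.Connected

/-- Signed degree of a vertex in `U`: positive edges minus negative edges. -/
def sdegU (u : G.U) : ℤ :=
  ((Finset.univ.filter fun v => G.pos u v = true).card : ℤ) -
  ((Finset.univ.filter fun v => G.neg u v = true).card : ℤ)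

/-- Signed degree of a vertex in `V`. -/
def sdegV (v : G.V) : ℤ :=
  ((Finset.univ.filter fun u => G.pos u v = true).card : ℤ) -
  ((Finset.univ.filter fun u => G.neg u v = true).card : ℤ)

/-- The signed degree set: the set of distinct signed degrees of the vertices. -/
def sdegSet : Set ℤ := Set.range G.sdegU ∪ Set.range G.sdegV

end SignedBipartiteGraph

/-!
Let `n₁ < ⋯ < n_k` be the absolute values of the elements of `S` and `m = n_k`. Take
`U = V = {0, …, m-1}`, give a vertex `x` the weight `r(x) = #{i | nᵢ ≤ x}`, and join `x ∈ U`
and `y ∈ V` by a negative edge iff `r(x) + r(y) < k`. Since `r(y) < r(nⱼ) ↔ y < nⱼ`, the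
neighbourhood of a vertex of weight `k - j` is exactly `{0, …, nⱼ - 1}`, so its signed degree is
`-nⱼ`; the weights `0, …, k-1` all occur, and the vertices `0` (weight `0`) are adjacent to the
whole other side.
-/

namespace Finset

variable {α : Type*} [LinearOrder α] (N : Finset α)

def rank (x : α) : ℕ := #{n ∈ N | n ≤ x}

theorem rank_mono : Monotone N.rank := fun _ _ hxy =>
  card_le_card (monotone_filter_right _ fun _ _ hn => hn.trans hxy)

theorem rank_le_card (x : α) : N.rank x ≤ #N := card_filter_le _ _

variable {N}

theorem one_le_rank {n : α} (hn : n ∈ N) : 1 ≤ N.rank n :=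
  card_pos.mpr ⟨n, mem_filter.mpr ⟨hn, le_rfl⟩⟩

theorem rank_lt_rank_iff {n : α} (hn : n ∈ N) (y : α) : N.rank y < N.rank n ↔ y < n := by
  constructor
  · intro h
    by_contra! hny
    exact (N.rank_mono hny).not_gt h
  · intro hyn
    refine card_lt_card ⟨monotone_filter_right _ fun _ _ hm => hm.trans hyn.le, fun hsub => ?_⟩
    exact (mem_filter.mp (hsub (mem_filter.mpr ⟨hn, le_rfl⟩))).2.not_gt hyn

theorem rank_strictMonoOn : StrictMonoOn N.rank N := fun a _ _ hb hab =>
  (rank_lt_rank_iff hb a).mpr hab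

theorem exists_rank_eq {j : ℕ} (hj₁ : 1 ≤ j) (hj : j ≤ #N) : ∃ n ∈ N, N.rank n = j := by
  obtain ⟨n, hn, hnj⟩ := surj_on_of_inj_on_of_card_le (fun a _ => N.rank a)
    (fun a ha => mem_Icc.mpr ⟨one_le_rank ha, N.rank_le_card a⟩)
    (fun _ _ ha hb => rank_strictMonoOn.injOn ha hb) (by simp) j (mem_Icc.mpr ⟨hj₁, hj⟩)
  exact ⟨n, hn, hnj.symm⟩

theorem rank_max' (hN : N.Nonempty) : N.rank (N.max' hN) = #N :=
  congrArg card (filter_true_of_mem fun n hn => N.le_max' n hn)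

theorem rank_lt_card_iff (hN : N.Nonempty) {x : α} : N.rank x < #N ↔ x < N.max' hN := by
  rw [← rank_max' hN, rank_lt_rank_iff (N.max'_mem hN)]

theorem rank_eq_zero {x : α} (hx : ∀ n ∈ N, x < n) : N.rank x = 0 :=
  card_eq_zero.mpr (filter_eq_empty_iff.mpr fun n hn => not_le.mpr (hx n hn))

theorem exists_rank_add_lt_iff {x : α} (hx : N.rank x < #N) :
    ∃ n ∈ N, ∀ y, N.rank x + N.rank y < #N ↔ y < n := by
  obtain ⟨n, hn, hrank⟩ := exists_rank_eq (N := N) (j := #N - N.rank x) (by omega) (by omega)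
  exact ⟨n, hn, fun y => by rw [← rank_lt_rank_iff hn, hrank]; omega⟩

theorem exists_lt_max'_rank_eq (hN : N.Nonempty) {b : α} (hb : ∀ n ∈ N, b < n) {j : ℕ}
    (hj : j < #N) : ∃ x < N.max' hN, N.rank x = j := by
  rcases Nat.eq_zero_or_pos j with rfl | hj₀
  · exact ⟨b, hb _ (N.max'_mem hN), rank_eq_zero hb⟩
  · obtain ⟨x, -, hxj⟩ := exists_rank_eq hj₀ hj.le
    exact ⟨x, (rank_lt_card_iff hN).mp (hxj ▸ hj), hxj⟩

theorem exists_rank_add_lt_iff_of_mem (hN : N.Nonempty) {b : α} (hb : ∀ n ∈ N, b < n) {n : α}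
    (hn : n ∈ N) : ∃ x < N.max' hN, ∀ y, N.rank x + N.rank y < #N ↔ y < n := by
  have := one_le_rank hn
  have := N.rank_le_card n
  obtain ⟨x, hx, hrank⟩ := exists_lt_max'_rank_eq hN hb (j := #N - N.rank n) (by omega)
  refine ⟨x, hx, fun y => ?_⟩
  rw [← rank_lt_rank_iff hn y, hrank]
  omega

end Finset

namespace SignedBipartiteGraph

theorem connected_of_forall_adj (G : SignedBipartiteGraph) (u₀ : G.U) (v₀ : G.V)
    (hu₀ : ∀ v, G.graph.Adj (.inl u₀) (.inr v)) (hv₀ : ∀ u, G.graph.Adj (.inl u) (.inr v₀)) :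
    G.Connected := by
  have hreach : ∀ a, G.graph.Reachable a (.inl u₀)
    | .inl u => (hv₀ u).reachable.trans (hu₀ v₀).reachable.symm
    | .inr v => (hu₀ v).reachable.symm
  have : Nonempty (G.U ⊕ G.V) := ⟨.inl u₀⟩
  exact ⟨fun a b => (hreach a).trans (hreach b).symm⟩

end SignedBipartiteGraph

open Finset SignedBipartiteGraph

section ThresholdGraph

variable (N : Finset ℕ) (hN : N.Nonempty) (hpos : ∀ n ∈ N, 0 < n)

def thresholdGraph : SignedBipartiteGraph where
  U := Fin (N.max' hN)
  V := Fin (N.max' hN)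
  nU := ⟨⟨0, hpos _ (N.max'_mem hN)⟩⟩
  nV := ⟨⟨0, hpos _ (N.max'_mem hN)⟩⟩
  pos _ _ := false
  neg x y := decide (N.rank x + N.rank y < #N)
  disj := by simp

variable {N hN hpos}

theorem thresholdGraph_sdegU (x : Fin (N.max' hN)) :
    (thresholdGraph N hN hpos).sdegU x = -#{y : Fin (N.max' hN) | N.rank x + N.rank y < #N} := by
  simp only [sdegU, thresholdGraph, Bool.false_eq_true, filter_false, card_empty,
    Nat.cast_zero, decide_eq_true_eq, zero_sub]
  congr

theorem thresholdGraph_sdegV (y : Fin (N.max' hN)) :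
    (thresholdGraph N hN hpos).sdegV y = (thresholdGraph N hN hpos).sdegU y := by
  rw [thresholdGraph_sdegU]
  simp only [sdegV, thresholdGraph, Bool.false_eq_true, filter_false, card_empty,
    Nat.cast_zero, decide_eq_true_eq, zero_sub, neg_inj, Nat.cast_inj]
  exact congrArg card (filter_congr fun x _ => by rw [Nat.add_comm])

theorem thresholdGraph_connected : (thresholdGraph N hN hpos).Connected := by
  have hadj (x : Fin (N.max' hN)) : N.rank 0 + N.rank x < #N := by
    rw [rank_eq_zero hpos, zero_add]
    exact (rank_lt_card_iff hN).mpr x.isLt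
  refine connected_of_forall_adj _ ⟨0, hpos _ (N.max'_mem hN)⟩ ⟨0, hpos _ (N.max'_mem hN)⟩
    (fun v => Or.inr (decide_eq_true (hadj v)))
    (fun u => Or.inr (decide_eq_true (Nat.add_comm _ _ ▸ hadj u)))

theorem card_filter_rank_add_lt {x : ℕ} {n : ℕ} (hn : n ∈ N)
    (hxn : ∀ y, N.rank x + N.rank y < #N ↔ y < n) :
    #{y : Fin (N.max' hN) | N.rank x + N.rank y < #N} = n := by
  simp only [hxn, Fin.card_filter_val_lt]
  exact min_eq_right (N.le_max' n hn)

theorem thresholdGraph_sdegSet :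
    (thresholdGraph N hN hpos).sdegSet = (fun n : ℕ => -(n : ℤ)) '' N := by
  have hV : Set.range (thresholdGraph N hN hpos).sdegV =
      Set.range (thresholdGraph N hN hpos).sdegU := congrArg Set.range (funext thresholdGraph_sdegV)
  rw [sdegSet, hV, Set.union_self]
  ext z
  simp only [Set.mem_range, Set.mem_image, mem_coe]
  constructor
  · rintro ⟨x, rfl⟩
    obtain ⟨n, hn, hxn⟩ := exists_rank_add_lt_iff ((rank_lt_card_iff hN).mpr x.isLt)
    exact ⟨n, hn, by rw [thresholdGraph_sdegU (x := x), card_filter_rank_add_lt hn hxn]⟩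
  · rintro ⟨n, hn, rfl⟩
    obtain ⟨x, hx, hxn⟩ := exists_rank_add_lt_iff_of_mem hN hpos hn
    exact ⟨(⟨x, hx⟩ : Fin _), by rw [thresholdGraph_sdegU, card_filter_rank_add_lt hn hxn]⟩

end ThresholdGraph

/-- Every finite nonempty set of negative integers is the signed degree set of
some connected signed bipartite graph. -/
theorem signed_degree_set_of_negative (S : Finset ℤ) (hS : S.Nonempty)
    (hneg : ∀ x ∈ S, x < 0) :
    ∃ G : SignedBipartiteGraph, G.Connected ∧ G.sdegSet = ↑S := by
  set N := S.image fun s => (-s).toNat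
  have hpos : ∀ n ∈ N, 0 < n := by
    simp only [N, mem_image, forall_exists_index, and_imp]
    rintro _ s hs rfl
    have := hneg s hs
    omega
  refine ⟨thresholdGraph N (hS.image _) hpos, thresholdGraph_connected, ?_⟩
  rw [thresholdGraph_sdegSet]
  calc (fun n : ℕ => -(n : ℤ)) '' ↑N = id '' ↑S := by
        rw [coe_image, Set.image_image]
        refine Set.image_congr fun s hs => ?_
        have := hneg s hs
        simp only [id]
        omega
    _ = S := Set.image_id _
end

section
/- Let d1, d2, ..., dn be positive integers (n ≥ 1). Then there exists a connected signed bipartite graph whose signed degree set is exactly {d1, d1+d2, ..., d1+d2+...+dn}, the set of partial sums. -/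
/-!
Take `n` blocks of sizes `d₁, …, dₙ` on each side and join block `i` of `U` positively to block
`j` of `V` exactly when `i + j < n` (blocks indexed from `0`). A vertex of block `i` on either
side then has signed degree `d₁ + ⋯ + d_{n-i}`, so the degree set is the set of partial sums, and
the vertices of block `0` are adjacent to every vertex of the other side, which connects the graph.
-/

open Finset

namespace SignedBipartiteGraph

variable (G : SignedBipartiteGraph)

theorem connected_of_adj_all (u₀ : G.U) (v₀ : G.V) (hu₀ : ∀ v, G.graph.Adj (.inl u₀) (.inr v))
    (hv₀ : ∀ u, G.graph.Adj (.inl u) (.inr v₀)) : G.Connected := by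
  have reach : ∀ w, G.graph.Reachable w (.inl u₀) := by
    rintro (u | v)
    · exact (hv₀ u).reachable.trans (hu₀ v₀).symm.reachable
    · exact (hu₀ v).symm.reachable
  have : Nonempty (G.U ⊕ G.V) := ⟨.inl u₀⟩
  exact SimpleGraph.Connected.mk fun a b => (reach a).trans (reach b).symm

def ofRel {α β : Type} [Fintype α] [Fintype β] [DecidableEq α] [DecidableEq β] [Nonempty α]
    [Nonempty β] (r : α → β → Prop) [DecidableRel r] : SignedBipartiteGraph where
  U := α
  V := β
  nU := ‹_›
  nV := ‹_›
  pos a b := decide (r a b)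
  neg _ _ := false
  disj := by simp

section ofRel

variable {α β : Type} [Fintype α] [Fintype β] [DecidableEq α] [DecidableEq β] [Nonempty α]
  [Nonempty β] (r : α → β → Prop) [DecidableRel r]

theorem sdegU_ofRel (a : α) : (ofRel r).sdegU a = #{b | r a b} := by
  simp only [sdegU, ofRel, decide_eq_true_eq, Bool.false_eq_true, filter_false, card_empty,
    Nat.cast_zero, sub_zero]
  congr

theorem sdegV_ofRel (b : β) : (ofRel r).sdegV b = #{a | r a b} := by
  simp only [sdegV, ofRel, decide_eq_true_eq, Bool.false_eq_true, filter_false, card_empty,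
    Nat.cast_zero, sub_zero]
  congr

theorem ofRel_graph_adj_inl_inr (a : α) (b : β) :
    (ofRel r).graph.Adj (.inl a) (.inr b) ↔ r a b := by
  show decide (r a b) = true ∨ false = true ↔ r a b
  simp

end ofRel

section staircase

variable {n : ℕ} (k : Fin n → ℕ)

theorem card_filter_fst_add_lt (m : Fin n) :
    #{y : Σ i, Fin (k i) | m.val + y.1.val < n} = ∑ j ∈ Iic m.rev, k j := by
  have : ({y : Σ i, Fin (k i) | m.val + y.1.val < n} : Finset _) =
      (Iic m.rev).sigma fun _ => univ := by
    ext y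
    simp only [mem_filter, mem_univ, true_and, mem_sigma, and_true, mem_Iic, Fin.le_def,
      Fin.val_rev]
    omega
  simp only [this, card_sigma, card_univ, Fintype.card_fin]

def staircase [Nonempty (Σ i, Fin (k i))] : SignedBipartiteGraph :=
  ofRel fun x y : Σ i, Fin (k i) => x.1.val + y.1.val < n

variable [Nonempty (Σ i, Fin (k i))]

theorem sdegU_staircase (x : Σ i, Fin (k i)) :
    (staircase k).sdegU x = ∑ j ∈ Iic x.1.rev, (k j : ℤ) :=
  (sdegU_ofRel _ x).trans (mod_cast card_filter_fst_add_lt k x.1)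

theorem sdegV_staircase (y : Σ i, Fin (k i)) :
    (staircase k).sdegV y = ∑ j ∈ Iic y.1.rev, (k j : ℤ) := by
  refine (sdegV_ofRel _ y).trans ?_
  simp_rw [Nat.add_comm _ y.1.val]
  exact mod_cast card_filter_fst_add_lt k y.1

theorem sdegSet_staircase (hk : ∀ i, 0 < k i) :
    (staircase k).sdegSet = Set.range fun i => ∑ j ∈ Iic i, (k j : ℤ) := by
  have hfst : Function.Surjective (Sigma.fst : (Σ i, Fin (k i)) → Fin n) :=
    fun i => ⟨⟨i, ⟨0, hk i⟩⟩, rfl⟩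
  have hrange (f : (Σ i, Fin (k i)) → ℤ) (hf : ∀ x, f x = ∑ j ∈ Iic x.1.rev, (k j : ℤ)) :
      Set.range f = Set.range fun i => ∑ j ∈ Iic i, (k j : ℤ) := by
    rw [funext hf]
    exact (Fin.rev_surjective.comp hfst).range_comp fun i => ∑ j ∈ Iic i, (k j : ℤ)
  exact (congrArg₂ (· ∪ ·) (hrange _ (sdegU_staircase k)) (hrange _ (sdegV_staircase k))).trans
    (Set.union_self _)

theorem connected_staircase (hn : 0 < n) (hk : ∀ i, 0 < k i) : (staircase k).Connected := by
  let x₀ : Σ i, Fin (k i) := ⟨⟨0, hn⟩, ⟨0, hk _⟩⟩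
  have hx₀ : ∀ y : Σ i, Fin (k i), (staircase k).graph.Adj (.inl x₀) (.inr y) :=
    fun y => (ofRel_graph_adj_inl_inr _ x₀ y).2 (by simp [x₀])
  have hy₀ : ∀ x : Σ i, Fin (k i), (staircase k).graph.Adj (.inl x) (.inr x₀) :=
    fun x => (ofRel_graph_adj_inl_inr _ x x₀).2 (by simp [x₀])
  exact connected_of_adj_all _ x₀ x₀ hx₀ hy₀

end staircase

end SignedBipartiteGraph

/-- For positive integers d₁, …, dₙ (n ≥ 1) there is a connected signed
bipartite graph whose signed degree set is exactly the set of partial sums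
{d₁, d₁+d₂, …, d₁+⋯+dₙ}. -/
theorem signed_degree_set_partial_sums (n : ℕ) (hn : 1 ≤ n) (d : Fin n → ℤ)
    (hd : ∀ i, 0 < d i) :
    ∃ G : SignedBipartiteGraph, G.Connected ∧
      G.sdegSet = Set.range (fun i : Fin n => ∑ j ∈ Finset.Iic i, d j) := by
  set k : Fin n → ℕ := fun i => (d i).toNat
  have hk : ∀ i, 0 < k i := fun i => Int.lt_toNat.2 (hd i)
  have hdk : d = fun i => (k i : ℤ) := funext fun i => (Int.toNat_of_nonneg (hd i).le).symm
  have : Nonempty (Σ i, Fin (k i)) := ⟨⟨⟨0, hn⟩, ⟨0, hk _⟩⟩⟩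
  refine ⟨.staircase k, SignedBipartiteGraph.connected_staircase k hn hk, ?_⟩
  rw [SignedBipartiteGraph.sdegSet_staircase k hk, hdk]
end

section
/- If S1 is a finite nonempty set of positive integers, then S1 ∪ {0} is the signed degree set of some connected signed bipartite graph. -/
/-!
For each `i` take centres `u i`, `v i` and `n i` pendant pairs `y i k`, `z i k`, with positive
edges `u i v i`, `u i z i k`, `y i k v i` and negative edges `y i k z i k`: the centres get signed
degree `n i + 1` and the pendants `0`. These gadgets are joined through two hubs `h₊`, `h₋` by
the alternating 4-cycles `u i h₊ b i h₋` on new vertices `b i`; an alternating cycle adds `+1`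
and `-1` at each of its vertices, so the graph becomes connected without changing any signed
degree.
-/

open Finset

theorem sum_signType_coe_eq_card_sub_card {α : Type*} [Fintype α] (t : α → SignType) :
    ∑ a, (t a : ℤ) = (#{a | t a = 1} : ℤ) - #{a | t a = -1} := by
  simp only [card_filter, Nat.cast_sum, Nat.cast_ite, Nat.cast_one, Nat.cast_zero,
    ← sum_sub_distrib]
  refine sum_congr rfl fun a _ => ?_
  rcases t a with _ | _ | _ <;> simp

theorem card_filter_sigma_fst_eq {ι : Type*} [Fintype ι] [DecidableEq ι] {κ : ι → Type*}
    [∀ i, Fintype (κ i)] (i : ι) : #{x : Σ i, κ i | x.1 = i} = Fintype.card (κ i) := by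
  rw [card_filter, Fintype.sum_sigma]
  simp [apply_ite card]

namespace SignedBipartiteGraph

section OfSign

variable {U V : Type} [Fintype U] [Fintype V] [DecidableEq U] [DecidableEq V]
  [Nonempty U] [Nonempty V]

def ofSign (s : U → V → SignType) : SignedBipartiteGraph where
  U := U
  V := V
  nU := inferInstance
  nV := inferInstance
  pos u v := s u v = 1
  neg u v := s u v = -1
  disj u v := by simp only [decide_eq_true_eq, not_and]; intro h; simp [h]

variable (s : U → V → SignType)

theorem sdegU_ofSign (u : U) : (ofSign s).sdegU u = ∑ v, (s u v : ℤ) := by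
  rw [sum_signType_coe_eq_card_sub_card]
  simp only [sdegU, ofSign, decide_eq_true_eq]
  congr

theorem sdegV_ofSign (v : V) : (ofSign s).sdegV v = ∑ u, (s u v : ℤ) := by
  rw [sum_signType_coe_eq_card_sub_card]
  simp only [sdegV, ofSign, decide_eq_true_eq]
  congr

theorem sdegSet_ofSign : (ofSign s).sdegSet =
    Set.range (fun u => ∑ v, (s u v : ℤ)) ∪ Set.range (fun v => ∑ u, (s u v : ℤ)) := by
  rw [sdegSet, funext (sdegU_ofSign s), funext (sdegV_ofSign s)]
  rfl

theorem graph_adj_ofSign (u : U) (v : V) :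
    (ofSign s).graph.Adj (.inl u) (.inr v) ↔ s u v ≠ 0 := by
  change (decide _ = true ∨ decide _ = true) ↔ _
  rcases s u v with _ | _ | _ <;> decide

end OfSign

section Realizing

variable {ι : Type} [Fintype ι] [DecidableEq ι] (n : ι → ℕ)

abbrev RealizingLeft : Type := ι ⊕ (Σ i, Fin (n i)) ⊕ ι

abbrev RealizingRight : Type := ι ⊕ (Σ i, Fin (n i)) ⊕ Bool

/-- Left vertices are `u i`, `y i k`, `b i`; right vertices are `v i`, `z i k` and the hubs
`h₊ = false`, `h₋ = true`. -/
def realizingSign : RealizingLeft n → RealizingRight n → SignType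
  | .inl i, .inl i' => if i = i' then 1 else 0
  | .inl i, .inr (.inl z) => if z.1 = i then 1 else 0
  | .inl _, .inr (.inr h) => if h then -1 else 1
  | .inr (.inl y), .inl i => if y.1 = i then 1 else 0
  | .inr (.inl y), .inr (.inl z) => if y = z then -1 else 0
  | .inr (.inr _), .inr (.inr h) => if h then 1 else -1
  | _, _ => 0

theorem sum_realizingSign_left (x : RealizingLeft n) :
    ∑ v, (realizingSign n x v : ℤ) = Sum.elim (fun i => (n i + 1 : ℤ)) 0 x := by
  rcases x with i | y | i <;>
    simp [realizingSign, Fintype.sum_sum_type, apply_ite, card_filter_sigma_fst_eq, add_comm]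

theorem sum_realizingSign_right (x : RealizingRight n) :
    ∑ u, (realizingSign n u x : ℤ) = Sum.elim (fun i => (n i + 1 : ℤ)) 0 x := by
  rcases x with i | y | (_ | _) <;>
    simp [realizingSign, Fintype.sum_sum_type, apply_ite, card_filter_sigma_fst_eq, add_comm]

variable [Nonempty ι]

def realizing : SignedBipartiteGraph := ofSign (realizingSign n)

theorem sdegSet_realizing :
    (realizing n).sdegSet = Set.range (fun i => (n i + 1 : ℤ)) ∪ {0} := by
  simp only [realizing, sdegSet_ofSign, sum_realizingSign_left, sum_realizingSign_right,
    Set.Sum.elim_range, Pi.zero_def, Set.range_const, Set.union_self]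

theorem realizing_connected : (realizing n).Connected := by
  let hub : (realizing n).U ⊕ (realizing n).V := .inr (.inr (.inr false))
  have adj (u : RealizingLeft n) (v : RealizingRight n) (h : realizingSign n u v ≠ 0) :
      (realizing n).graph.Reachable (.inl u) (.inr v) :=
    ((graph_adj_ofSign _ u v).2 h).reachable
  have centre (i : ι) : (realizing n).graph.Reachable (.inl (.inl i)) hub :=
    adj _ _ (by simp [realizingSign])
  have left (u : RealizingLeft n) : (realizing n).graph.Reachable (.inl u) hub := by
    rcases u with i | ⟨i, k⟩ | i
    · exact centre i
    · exact (adj _ (.inl i) (by simp [realizingSign])).trans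
        ((adj _ _ (by simp [realizingSign])).symm.trans (centre i))
    · exact adj _ _ (by simp [realizingSign])
  refine (SimpleGraph.connected_iff_exists_forall_reachable _).2 ⟨hub, fun w => ?_⟩
  rcases w with u | v
  · exact (left u).symm
  · obtain ⟨u, hu⟩ : ∃ u, realizingSign n u v ≠ 0 := by
      rcases v with i | ⟨i, k⟩ | h
      · exact ⟨.inl i, by simp [realizingSign]⟩
      · exact ⟨.inl i, by simp [realizingSign]⟩
      · exact ⟨.inr (.inr (Classical.arbitrary ι)), by cases h <;> simp [realizingSign]⟩
    exact (left u).symm.trans (adj u v hu)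

end Realizing

end SignedBipartiteGraph

/-- If S₁ is a finite nonempty set of positive integers, then S₁ ∪ {0} is the
signed degree set of some connected signed bipartite graph. -/
theorem signed_degree_set_positive_with_zero (S₁ : Finset ℤ) (hS : S₁.Nonempty)
    (hpos : ∀ x ∈ S₁, 0 < x) :
    ∃ G : SignedBipartiteGraph, G.Connected ∧ G.sdegSet = ↑S₁ ∪ {0} := by
  have : Nonempty S₁ := hS.to_subtype
  let n (d : S₁) : ℕ := (d.1 - 1).toNat
  have hn : Set.range (fun d => (n d + 1 : ℤ)) = S₁ := by
    have (d : S₁) : (n d + 1 : ℤ) = d := by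
      have := hpos d d.2
      simp only [n]
      omega
    simp only [this, Subtype.range_coe_subtype, Finset.setOfPred_mem]
  refine ⟨.realizing n, SignedBipartiteGraph.realizing_connected n, ?_⟩
  rw [SignedBipartiteGraph.sdegSet_realizing, hn]
end

section
/- If S1 is a finite nonempty set of positive integers and S2 is a finite nonempty set of negative integers, then S1 ∪ S2 is the signed degree set of some connected signed bipartite graph. -/
/-!
Read an integer matrix with entries in `{-1, 0, 1}` as a signed bipartite graph: signed degrees
are then row and column sums. For every `x ∈ S₁ ∪ S₂` take two copies of a `|x| × |x|` block
filled with `sign x`; this block diagonal matrix already has the right row and column sums.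
To make the graph connected, add an entry `±1` between any two vertices in blocks of opposite
sign, `+1` when they lie in the same copy and `-1` otherwise. Exchanging the two copies negates
these entries, so they add nothing to any signed degree, and since there are blocks of both signs
they link all blocks together.
-/

open Finset

theorem Finset.card_filter_pos_sub_card_filter_neg {ι : Type*} [Fintype ι] (f : ι → ℤ) :
    (#{i | 0 < f i} : ℤ) - #{i | f i < 0} = ∑ i, (f i).sign := by
  rw [← sum_boole, ← sum_boole, ← sum_sub_distrib]
  refine sum_congr rfl fun i _ => ?_
  rcases lt_trichotomy (f i) 0 with h | h | h
  · simp [h, Int.sign_eq_neg_one_of_neg h, h.not_gt]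
  · simp [h]
  · simp [h, Int.sign_eq_one_of_pos h, h.not_gt]

namespace SignedBipartiteGraph

variable {U V : Type} [Fintype U] [Fintype V] [DecidableEq U] [DecidableEq V]
  [Nonempty U] [Nonempty V]

def ofMatrix (A : U → V → ℤ) : SignedBipartiteGraph where
  U := U
  V := V
  nU := ‹_›
  nV := ‹_›
  pos u v := decide (0 < A u v)
  neg u v := decide (A u v < 0)
  disj u v h := by simp only [decide_eq_true_eq] at h; omega

theorem sdegU_ofMatrix (A : U → V → ℤ) (u : U) :
    (ofMatrix A).sdegU u = ∑ v, (A u v).sign := by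
  simp only [sdegU, ofMatrix, decide_eq_true_eq]
  exact card_filter_pos_sub_card_filter_neg _

theorem sdegV_ofMatrix (A : U → V → ℤ) (v : V) :
    (ofMatrix A).sdegV v = ∑ u, (A u v).sign := by
  simp only [sdegV, ofMatrix, decide_eq_true_eq]
  exact card_filter_pos_sub_card_filter_neg _

theorem ofMatrix_adj {A : U → V → ℤ} {u : U} {v : V} (h : A u v ≠ 0) :
    (ofMatrix A).graph.Adj (Sum.inl u) (Sum.inr v) := by
  change decide (0 < A u v) = true ∨ decide (A u v < 0) = true
  simp only [decide_eq_true_eq]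
  omega

end SignedBipartiteGraph

/-- For each `x ∈ S`, two copies (indexed by `Bool`) of a block of `|x|` vertices. -/
abbrev BlockVertex (S : Finset ℤ) : Type := Σ p : S × Bool, Fin p.1.1.natAbs

namespace BlockVertex

variable {S : Finset ℤ}

def val (u : BlockVertex S) : ℤ := u.1.1.1

def copy (u : BlockVertex S) : Bool := u.1.2

theorem val_ne_zero (u : BlockVertex S) : u.val ≠ 0 := by
  have := u.2.pos
  simp only [val]
  omega

theorem exists_val_eq {x : ℤ} (hx : x ∈ S) (h0 : x ≠ 0) : ∃ u : BlockVertex S, u.val = x :=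
  ⟨⟨(⟨x, hx⟩, false), ⟨0, Int.natAbs_pos.mpr h0⟩⟩, rfl⟩

theorem range_val (hS : 0 ∉ S) : Set.range (val (S := S)) = S := by
  ext x
  refine ⟨?_, fun hx => exists_val_eq hx (ne_of_mem_of_not_mem hx hS)⟩
  rintro ⟨u, rfl⟩
  exact u.1.1.2

theorem val_eq_of_fst_eq {u v : BlockVertex S} (h : u.1 = v.1) : u.val = v.val :=
  congrArg (fun p => p.1.1) h

def flip (u : BlockVertex S) : BlockVertex S := ⟨(u.1.1, !u.1.2), u.2⟩

@[simp] theorem val_flip (u : BlockVertex S) : u.flip.val = u.val := rfl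

@[simp] theorem copy_flip (u : BlockVertex S) : u.flip.copy = !u.copy := rfl

theorem flip_flip (u : BlockVertex S) : u.flip.flip = u := by
  rcases u with ⟨⟨x, c⟩, r⟩
  simp [flip]

theorem flip_ne (u : BlockVertex S) : u.flip ≠ u := by
  intro h
  simpa using congrArg copy h

end BlockVertex

open BlockVertex

variable (S : Finset ℤ)

def blockMatrix (u v : BlockVertex S) : ℤ := if u.1 = v.1 then u.val.sign else 0

def crossMatrix (u v : BlockVertex S) : ℤ :=
  if u.val * v.val < 0 then (if u.copy = v.copy then 1 else -1) else 0

def realizingMatrix : BlockVertex S → BlockVertex S → ℤ := blockMatrix S + crossMatrix S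

variable {S}

theorem blockMatrix_comm (u v : BlockVertex S) : blockMatrix S u v = blockMatrix S v u := by
  by_cases h : u.1 = v.1
  · simp [blockMatrix, h, val_eq_of_fst_eq h]
  · simp [blockMatrix, h, Ne.symm h]

theorem crossMatrix_comm (u v : BlockVertex S) : crossMatrix S u v = crossMatrix S v u := by
  simp only [crossMatrix, mul_comm u.val, eq_comm (a := u.copy)]

theorem realizingMatrix_comm (u v : BlockVertex S) :
    realizingMatrix S u v = realizingMatrix S v u := by
  simp only [realizingMatrix, Pi.add_apply, blockMatrix_comm u v, crossMatrix_comm u v]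

theorem sum_blockMatrix (u : BlockVertex S) : ∑ v, blockMatrix S u v = u.val := by
  rw [Fintype.sum_sigma, Fintype.sum_eq_single u.1]
  · simp only [blockMatrix, if_true, sum_const, card_univ, Fintype.card_fin, nsmul_eq_mul]
    rw [mul_comm]
    exact Int.sign_mul_natAbs _
  · intro x hx
    simp [blockMatrix, Ne.symm hx]

theorem sum_crossMatrix (u : BlockVertex S) : ∑ v, crossMatrix S u v = 0 := by
  refine sum_involution (fun v _ => v.flip) (fun v _ => ?_) (fun v _ _ => v.flip_ne)
    (fun _ _ => mem_univ _) (fun v _ => v.flip_flip)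
  by_cases h : u.val * v.val < 0 <;> cases hu : u.copy <;> cases hv : v.copy <;>
    simp [crossMatrix, h, hu, hv]

theorem sum_realizingMatrix (u : BlockVertex S) : ∑ v, realizingMatrix S u v = u.val := by
  simp [realizingMatrix, sum_add_distrib, sum_blockMatrix, sum_crossMatrix]

theorem realizingMatrix_apply (u v : BlockVertex S) :
    realizingMatrix S u v = if u.1 = v.1 then u.val.sign else crossMatrix S u v := by
  by_cases h : u.1 = v.1
  · have hval : 0 ≤ u.val * v.val := val_eq_of_fst_eq h ▸ mul_self_nonneg _
    simp [realizingMatrix, blockMatrix, crossMatrix, h, hval.not_gt]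
  · simp [realizingMatrix, blockMatrix, h]

theorem sign_realizingMatrix (u v : BlockVertex S) :
    (realizingMatrix S u v).sign = realizingMatrix S u v := by
  rw [realizingMatrix_apply]
  split_ifs
  · exact Int.sign_sign
  · unfold crossMatrix
    split_ifs <;> rfl

theorem realizingMatrix_self_ne_zero (u : BlockVertex S) : realizingMatrix S u u ≠ 0 := by
  simp [realizingMatrix_apply, u.val_ne_zero]

theorem realizingMatrix_ne_zero_of_mul_neg {u v : BlockVertex S} (h : u.val * v.val < 0) :
    realizingMatrix S u v ≠ 0 := by
  have huv : u.1 ≠ v.1 := by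
    intro huv
    rw [val_eq_of_fst_eq huv] at h
    exact (mul_self_nonneg v.val).not_gt h
  rw [realizingMatrix_apply, if_neg huv, crossMatrix, if_pos h]
  split_ifs <;> norm_num

open SignedBipartiteGraph

variable [Nonempty (BlockVertex S)]

theorem sdegU_ofMatrix_realizingMatrix (u : BlockVertex S) :
    (ofMatrix (realizingMatrix S)).sdegU u = u.val := by
  rw [sdegU_ofMatrix]
  simp_rw [sign_realizingMatrix]
  exact sum_realizingMatrix u

theorem sdegV_ofMatrix_realizingMatrix (v : BlockVertex S) :
    (ofMatrix (realizingMatrix S)).sdegV v = v.val := by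
  rw [sdegV_ofMatrix]
  simp_rw [sign_realizingMatrix, realizingMatrix_comm _ v]
  exact sum_realizingMatrix v

theorem sdegSet_ofMatrix_realizingMatrix (hS : 0 ∉ S) :
    (ofMatrix (realizingMatrix S)).sdegSet = S := by
  have hU : Set.range (ofMatrix (realizingMatrix S)).sdegU = Set.range (BlockVertex.val (S := S)) :=
    congrArg Set.range (funext sdegU_ofMatrix_realizingMatrix)
  have hV : Set.range (ofMatrix (realizingMatrix S)).sdegV = Set.range (BlockVertex.val (S := S)) :=
    congrArg Set.range (funext sdegV_ofMatrix_realizingMatrix)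
  rw [sdegSet, hU, hV, Set.union_self, range_val hS]

theorem connected_ofMatrix_realizingMatrix {p q : BlockVertex S} (hp : 0 < p.val) (hq : q.val < 0) :
    (ofMatrix (realizingMatrix S)).Connected := by
  set G := (ofMatrix (realizingMatrix S)).graph
  have adj_self (u : BlockVertex S) : G.Adj (.inl u) (.inr u) :=
    ofMatrix_adj (realizingMatrix_self_ne_zero u)
  have adj_of_mul_neg {u v : BlockVertex S} (h : u.val * v.val < 0) : G.Adj (.inl u) (.inr v) :=
    ofMatrix_adj (realizingMatrix_ne_zero_of_mul_neg h)
  have reach_inl (u : BlockVertex S) : G.Reachable (.inl u) (.inr q) := by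
    rcases u.val_ne_zero.lt_or_gt with hu | hu
    · exact (adj_of_mul_neg (mul_neg_of_neg_of_pos hu hp)).reachable.trans
        ((adj_self p).symm.reachable.trans (adj_of_mul_neg (mul_neg_of_pos_of_neg hp hq)).reachable)
    · exact (adj_of_mul_neg (mul_neg_of_pos_of_neg hu hq)).reachable
  have reach (w : BlockVertex S ⊕ BlockVertex S) : G.Reachable w (.inr q) := by
    rcases w with u | v
    · exact reach_inl u
    · exact (adj_self v).symm.reachable.trans (reach_inl v)
  exact (G.connected_iff_exists_forall_reachable).mpr ⟨.inr q, fun w => (reach w).symm⟩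

/-- If S₁ is a finite nonempty set of positive integers and S₂ a finite
nonempty set of negative integers, then S₁ ∪ S₂ is the signed degree set of
some connected signed bipartite graph. -/
theorem signed_degree_set_pos_union_neg (S₁ S₂ : Finset ℤ)
    (h₁ : S₁.Nonempty) (h₂ : S₂.Nonempty)
    (hpos : ∀ x ∈ S₁, 0 < x) (hneg : ∀ x ∈ S₂, x < 0) :
    ∃ G : SignedBipartiteGraph, G.Connected ∧ G.sdegSet = ↑S₁ ∪ ↑S₂ := by
  obtain ⟨a, ha⟩ := h₁
  obtain ⟨b, hb⟩ := h₂
  have hS : (0 : ℤ) ∉ S₁ ∪ S₂ := by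
    rw [mem_union]
    rintro (h | h)
    exacts [(hpos 0 h).false, (hneg 0 h).false]
  obtain ⟨p, hp⟩ := exists_val_eq (mem_union_left S₂ ha) (hpos a ha).ne'
  obtain ⟨q, hq⟩ := exists_val_eq (mem_union_right S₁ hb) (hneg b hb).ne
  have : Nonempty (BlockVertex (S₁ ∪ S₂)) := ⟨p⟩
  refine ⟨ofMatrix (realizingMatrix (S₁ ∪ S₂)),
    connected_ofMatrix_realizingMatrix (hp ▸ hpos a ha) (hq ▸ hneg b hb), ?_⟩
  rw [sdegSet_ofMatrix_realizingMatrix hS, coe_union]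
end
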